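/- Let A₀ be a unital C*-algebra and let A ∈ M_n(A₀) be a normal matrix with bandwidth m ≥ 1. Let F ⊂ ℂ be a compact set containing σ(A), let f : ℂ → ℂ be continuous on F, and suppose there exist constants c > 0 and 0 < q < 1 such that for every integer k ≥ 0 there is a complex polynomial p_k of degree at most k with sup_{z∈F} |f(z) − p_k(z)| ≤ c·q^k. Then for all indices i, j, ‖[f(A)]_{ij}‖ ≤ C · q^{|i−j|/m}, where C = max{‖f(A)‖, c/q} and f(A) is defined by the continuous functional calculus for normal elements. -/

import Mathlib

/-!
Every entry of a matrix over a C⋆-algebra is bounded in norm by the norm of the matrix, and a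
polynomial of degree `k` in a matrix of bandwidth `m` has bandwidth `k * m`. So for entries at
distance `|i - j| > k * m` one may subtract `p_k(A)` from `f(A)` for free, and the entry is
bounded by `‖f(A) - p_k(A)‖ = sup_{σ(A)} |f - p_k| ≤ c q^k`. Choosing the largest such `k`,
namely `k = ⌈|i - j| / m⌉ - 1`, gives `c q^k ≤ (c / q) q^{|i - j| / m}`.
-/

open Polynomial

namespace Matrix

variable {R : Type*} {n : ℕ}

def HasBandwidth [Zero R] (A : Matrix (Fin n) (Fin n) R) (m : ℕ) : Prop :=
  ∀ i j : Fin n, (m : ℤ) < |(i : ℤ) - (j : ℤ)| → A i j = 0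

section Semiring

variable [Semiring R] {A B : Matrix (Fin n) (Fin n) R} {a b : ℕ}

theorem HasBandwidth.mono (hA : A.HasBandwidth a) (hab : a ≤ b) : A.HasBandwidth b :=
  fun i j hij => hA i j (lt_of_le_of_lt (by exact_mod_cast hab) hij)

theorem hasBandwidth_one : (1 : Matrix (Fin n) (Fin n) R).HasBandwidth 0 := by
  intro i j hij
  exact one_apply_ne fun h => by simp [h] at hij

theorem HasBandwidth.mul (hA : A.HasBandwidth a) (hB : B.HasBandwidth b) :
    (A * B).HasBandwidth (a + b) := by
  intro i j hij
  refine (mul_apply ..).trans <| Finset.sum_eq_zero fun k _ => ?_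
  by_cases hik : (a : ℤ) < |(i : ℤ) - (k : ℤ)|
  · rw [hA i k hik, zero_mul]
  · have hkj : (b : ℤ) < |(k : ℤ) - (j : ℤ)| := by
      have := abs_sub_le (i : ℤ) k j
      push_cast at hij
      linarith
    rw [hB k j hkj, mul_zero]

theorem HasBandwidth.pow (hA : A.HasBandwidth a) (t : ℕ) : (A ^ t).HasBandwidth (t * a) := by
  induction t with
  | zero => simpa using hasBandwidth_one
  | succ t ih => simpa [pow_succ, Nat.succ_mul] using ih.mul hA

theorem HasBandwidth.aeval {S : Type*} [CommSemiring S] [Algebra S R] (hA : A.HasBandwidth a)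
    {p : S[X]} {k : ℕ} (hp : p.degree ≤ k) : (Polynomial.aeval A p).HasBandwidth (k * a) := by
  intro i j hij
  rw [aeval_eq_sum_range, sum_apply]
  refine Finset.sum_eq_zero fun t ht => ?_
  have htk : t ≤ k := by
    have := natDegree_le_iff_degree_le.mpr hp
    have := Finset.mem_range.mp ht
    omega
  rw [smul_apply, (hA.pow t).mono (Nat.mul_le_mul_right a htk) i j hij, smul_zero]

end Semiring

end Matrix

theorem StarAlgEquiv.norm_matrix_apply_le {A₀ 𝒜 ι : Type*} [CStarAlgebra A₀] [CStarAlgebra 𝒜]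
    [Fintype ι] [DecidableEq ι] (ψ : 𝒜 ≃⋆ₐ[ℂ] Matrix ι ι A₀) (x : 𝒜) (i j : ι) :
    ‖ψ x i j‖ ≤ ‖x‖ := by
  -- `Matrix ι ι A₀` carries no norm; `CStarMatrix` is the same type with its C⋆-norm, which
  -- is set up using the spectral order on `A₀`.
  let _ := CStarAlgebra.spectralOrder A₀
  let _ := CStarAlgebra.spectralOrderedRing A₀
  let ψ' : 𝒜 ≃⋆ₐ[ℂ] CStarMatrix ι ι A₀ := ψ.trans CStarMatrix.ofMatrixStarAlgEquiv
  calc ‖ψ x i j‖ = ‖ψ' x i j‖ := rfl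
    _ ≤ ‖ψ' x‖ := CStarMatrix.norm_entry_le_norm
    _ = ‖x‖ := StarAlgEquiv.norm_map ψ' x

theorem norm_cfc_sub_aeval_le {A : Type*} [CStarAlgebra A] {a : A} [IsStarNormal a] {f : ℂ → ℂ}
    (hf : ContinuousOn f (spectrum ℂ a)) (p : ℂ[X]) {ε : ℝ} (hε : 0 ≤ ε)
    (hp : ∀ z ∈ spectrum ℂ a, ‖f z - p.eval z‖ ≤ ε) :
    ‖cfc f a - Polynomial.aeval a p‖ ≤ ε := by
  rw [← cfc_polynomial p a, ← cfc_sub f (fun z => p.eval z) a hf p.continuous.continuousOn]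
  exact norm_cfc_le hε hp

theorem exists_nat_lt_and_pow_le_rpow_div {q x : ℝ} (hq₀ : 0 < q) (hq₁ : q ≤ 1) (hx : 0 < x) :
    ∃ k : ℕ, (k : ℝ) < x ∧ q ^ k ≤ q ^ x / q := by
  have hceil : 1 ≤ ⌈x⌉₊ := Nat.one_le_iff_ne_zero.mpr (Nat.ceil_pos.mpr hx).ne'
  refine ⟨⌈x⌉₊ - 1, ?_, ?_⟩
  · rw [Nat.cast_sub hceil, Nat.cast_one, sub_lt_iff_lt_add]
    exact Nat.ceil_lt_add_one hx.le
  · rw [le_div_iff₀ hq₀, ← pow_succ, Nat.sub_add_cancel hceil, ← Real.rpow_natCast]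
    exact Real.rpow_le_rpow_of_exponent_ge hq₀ hq₁ (Nat.le_ceil x)

theorem norm_entry_cfc_le_exp_decay_of_banded_normal_general
    {A₀ : Type*} [CStarAlgebra A₀] {n : ℕ}
    {𝒜 : Type*} [CStarAlgebra 𝒜]
    (φ : Matrix (Fin n) (Fin n) A₀ ≃⋆ₐ[ℂ] 𝒜)
    (A : Matrix (Fin n) (Fin n) A₀) (hA : IsStarNormal A)
    (m : ℕ)
    (hband : ∀ i j : Fin n, (m : ℤ) < |(i : ℤ) - (j : ℤ)| → A i j = 0)
    (F : Set ℂ) (hFA : spectrum ℂ A ⊆ F)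
    (f : ℂ → ℂ) (hf : ContinuousOn f F)
    (c q : ℝ) (hc : 0 < c) (hq₀ : 0 < q) (hq₁ : q < 1)
    (happrox : ∀ k : ℕ, ∃ p : Polynomial ℂ, p.degree ≤ k ∧
      ∀ z ∈ F, ‖f z - p.eval z‖ ≤ c * q ^ k)
    (i j : Fin n) :
    ‖(φ.symm (cfc f (φ A))) i j‖ ≤
      max ‖cfc f (φ A)‖ (c / q) * q ^ (|((i : ℕ) : ℝ) - ((j : ℕ) : ℝ)| / (m : ℝ)) := by
  set x := |((i : ℕ) : ℝ) - ((j : ℕ) : ℝ)| / (m : ℝ)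
  have hspec : spectrum ℂ (φ A) ⊆ F := (AlgEquiv.spectrum_eq φ A).symm ▸ hFA
  rcases (show 0 ≤ x by positivity).eq_or_lt with hx | hx
  · rw [← hx, Real.rpow_zero, mul_one]
    exact (φ.symm.norm_matrix_apply_le _ i j).trans (le_max_left _ _)
  obtain ⟨k, hkx, hqk⟩ := exists_nat_lt_and_pow_le_rpow_div hq₀ hq₁.le hx
  obtain ⟨p, hdeg, hp⟩ := happrox k
  have hm : (0 : ℝ) < m := Nat.cast_pos.mpr <| Nat.pos_of_ne_zero <| by rintro rfl; simp [x] at hx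
  have hpA : Polynomial.aeval A p i j = 0 := by
    refine Matrix.HasBandwidth.aeval hband hdeg i j ?_
    rw [lt_div_iff₀ hm] at hkx
    exact_mod_cast hkx
  calc ‖φ.symm (cfc f (φ A)) i j‖
      = ‖φ.symm (cfc f (φ A) - Polynomial.aeval (φ A) p) i j‖ := by
        rw [map_sub, Polynomial.aeval_algHom_apply, φ.symm_apply_apply, Matrix.sub_apply, hpA,
          sub_zero]
    _ ≤ c * q ^ k := (φ.symm.norm_matrix_apply_le _ i j).trans <|
        norm_cfc_sub_aeval_le (hf.mono hspec) p (by positivity) fun z hz => hp z (hspec hz)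
    _ ≤ c / q * q ^ x := by rw [div_mul_eq_mul_div, mul_div_assoc]; gcongr
    _ ≤ max ‖cfc f (φ A)‖ (c / q) * q ^ x := by gcongr; exact le_max_right _ _

/-- Let `A ∈ Mₙ(A₀)` be a normal matrix with bandwidth `m ≥ 1`, let
`F ⊆ ℂ` be compact with `σ(A) ⊆ F`, let `f : ℂ → ℂ` be continuous on `F`, and suppose there
are `c > 0`, `0 < q < 1` such that for each `k` some complex polynomial of degree at most `k`
approximates `f` on `F` within `c·q^k`.  Then, with `f(A) = φ.symm (cfc f (φ A))`
(continuous functional calculus for normal elements, the C*-structure of `Mₙ(A₀)` realized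
via the *-isomorphism `φ`), `‖[f(A)]_{ij}‖ ≤ max{‖f(A)‖, c/q} · q^{|i-j|/m}` for all `i, j`. -/
theorem norm_entry_cfc_le_exp_decay_of_banded_normal
    {A₀ : Type*} [CStarAlgebra A₀] {n : ℕ}
    {𝒜 : Type*} [CStarAlgebra 𝒜]
    (φ : Matrix (Fin n) (Fin n) A₀ ≃⋆ₐ[ℂ] 𝒜)
    (A : Matrix (Fin n) (Fin n) A₀) (hA : IsStarNormal A)
    (m : ℕ) (hm : 1 ≤ m)
    (hband : ∀ i j : Fin n, (m : ℤ) < |(i : ℤ) - (j : ℤ)| → A i j = 0)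
    (F : Set ℂ) (hF : IsCompact F) (hFA : spectrum ℂ A ⊆ F)
    (f : ℂ → ℂ) (hf : ContinuousOn f F)
    (c q : ℝ) (hc : 0 < c) (hq₀ : 0 < q) (hq₁ : q < 1)
    (happrox : ∀ k : ℕ, ∃ p : Polynomial ℂ, p.degree ≤ k ∧
      ∀ z ∈ F, ‖f z - p.eval z‖ ≤ c * q ^ k)
    (i j : Fin n) :
    ‖(φ.symm (cfc f (φ A))) i j‖ ≤
      max ‖cfc f (φ A)‖ (c / q) * q ^ (|((i : ℕ) : ℝ) - ((j : ℕ) : ℝ)| / (m : ℝ)) :=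
  norm_entry_cfc_le_exp_decay_of_banded_normal_general φ A hA m hband F hFA f hf c q hc hq₀ hq₁
    happrox i j
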